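/- Let F₁,…,F_J be CDFs on ℤ≥0 and e ∈ {0,1}^J with e₁ = 0, and let p^e be the extreme measure defined by p^e(i) = [min_j F̃_j(i_j − e_j; e_j) − max_j F̃_j(i_j + e_j − 1; e_j)]⁺. Then for every pair k < l, the 2-dimensional marginal p^e_{k,l} of p^e equals the comonotone Fréchet–Hoeffding coupling of F_k and F_l if e_k = e_l, and equals the antimonotone coupling if e_k ≠ e_l. -/
import Mathlib


open Filter

/-- Extension of a CDF `F : ℕ → ℝ` to `ℤ` with `F(i) = 0` for `i < 0`. -/
noncomputable def cdfExt (F : ℕ → ℝ) (i : ℤ) : ℝ := if i < 0 then 0 else F i.toNat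

/-- `F̃(i; e)`: the CDF if `e = false`, the survival function `1 − F(i)` if `e = true`,
with the convention `F(−1) = 0`. -/
noncomputable def Ftil (F : ℕ → ℝ) (e : Bool) (i : ℤ) : ℝ :=
  if e then 1 - cdfExt F i else cdfExt F i

def IsCDF (F : ℕ → ℝ) : Prop :=
  Monotone F ∧ 0 ≤ F 0 ∧ Tendsto F atTop (nhds 1)

open MeasureTheory

namespace ExtAux

variable {F : ℕ → ℝ}

lemma cdfExt_nat (F : ℕ → ℝ) (m : ℕ) : cdfExt F (m : ℤ) = F m := by
  simp [cdfExt]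

lemma cdfExt_nonneg (hF : IsCDF F) (i : ℤ) : 0 ≤ cdfExt F i := by
  unfold cdfExt; split
  · exact le_refl _
  · exact le_trans hF.2.1 (hF.1 (Nat.zero_le _))

lemma F_le_one (hF : IsCDF F) (m : ℕ) : F m ≤ 1 :=
  hF.1.ge_of_tendsto hF.2.2 m

lemma cdfExt_le_one (hF : IsCDF F) (i : ℤ) : cdfExt F i ≤ 1 := by
  unfold cdfExt; split
  · exact zero_le_one
  · exact F_le_one hF _

lemma cdfExt_mono (hF : IsCDF F) : Monotone (cdfExt F) := by
  intro i j hij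
  by_cases hi : i < 0
  · rw [show cdfExt F i = 0 by unfold cdfExt; rw [if_pos hi]]
    exact cdfExt_nonneg hF j
  · unfold cdfExt
    rw [if_neg hi, if_neg (by omega)]
    exact hF.1 (by omega)

/-- upper endpoint -/
noncomputable def Uof (F : ℕ → ℝ) (e : Bool) (m : ℕ) : ℝ :=
  Ftil F e ((m : ℤ) - (if e then 1 else 0))

/-- lower endpoint -/
noncomputable def Lof (F : ℕ → ℝ) (e : Bool) (m : ℕ) : ℝ :=
  Ftil F e ((m : ℤ) + (if e then 1 else 0) - 1)

lemma Uof_false (F : ℕ → ℝ) (m : ℕ) : Uof F false m = cdfExt F m := by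
  simp [Uof, Ftil]

lemma Uof_true (F : ℕ → ℝ) (m : ℕ) : Uof F true m = 1 - cdfExt F ((m : ℤ) - 1) := by
  simp [Uof, Ftil]

lemma Lof_false (F : ℕ → ℝ) (m : ℕ) : Lof F false m = cdfExt F ((m : ℤ) - 1) := by
  simp [Lof, Ftil]

lemma Lof_true (F : ℕ → ℝ) (m : ℕ) : Lof F true m = 1 - cdfExt F m := by
  simp [Lof, Ftil]

lemma Lof_le_Uof (hF : IsCDF F) (e : Bool) (m : ℕ) : Lof F e m ≤ Uof F e m := by
  cases e
  · rw [Lof_false, Uof_false]; exact cdfExt_mono hF (by omega)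
  · rw [Lof_true, Uof_true]
    have := cdfExt_mono hF (show ((m:ℤ) - 1) ≤ (m:ℤ) by omega)
    linarith

lemma Lof_nonneg (hF : IsCDF F) (e : Bool) (m : ℕ) : 0 ≤ Lof F e m := by
  cases e
  · rw [Lof_false]; exact cdfExt_nonneg hF _
  · rw [Lof_true]; linarith [cdfExt_le_one hF (m : ℤ)]

lemma Uof_le_one (hF : IsCDF F) (e : Bool) (m : ℕ) : Uof F e m ≤ 1 := by
  cases e
  · rw [Uof_false]; exact cdfExt_le_one hF _
  · rw [Uof_true]; linarith [cdfExt_nonneg hF ((m:ℤ) - 1)]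

/-- half-open interval associated to value `m` -/
noncomputable def Iset (F : ℕ → ℝ) (e : Bool) (m : ℕ) : Set ℝ :=
  if e then Set.Ioc (Lof F e m) (Uof F e m) else Set.Ico (Lof F e m) (Uof F e m)

lemma Iset_true (F : ℕ → ℝ) (m : ℕ) :
    Iset F true m = Set.Ioc (Lof F true m) (Uof F true m) := by simp [Iset]

lemma Iset_false (F : ℕ → ℝ) (m : ℕ) :
    Iset F false m = Set.Ico (Lof F false m) (Uof F false m) := by simp [Iset]

lemma Iset_subset_Icc (F : ℕ → ℝ) (e : Bool) (m : ℕ) :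
    Iset F e m ⊆ Set.Icc (Lof F e m) (Uof F e m) := by
  unfold Iset; split
  · exact Set.Ioc_subset_Icc_self
  · exact Set.Ico_subset_Icc_self

lemma Ioo_subset_Iset (F : ℕ → ℝ) (e : Bool) (m : ℕ) :
    Set.Ioo (Lof F e m) (Uof F e m) ⊆ Iset F e m := by
  unfold Iset; split
  · exact Set.Ioo_subset_Ioc_self
  · exact Set.Ioo_subset_Ico_self

lemma measurableSet_Iset (F : ℕ → ℝ) (e : Bool) (m : ℕ) : MeasurableSet (Iset F e m) := by
  unfold Iset; split
  · exact measurableSet_Ioc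
  · exact measurableSet_Ico

lemma Iset_disjoint (hF : IsCDF F) (e : Bool) {m m' : ℕ} (h : m ≠ m') :
    Disjoint (Iset F e m) (Iset F e m') := by
  rcases h.lt_or_gt with h' | h'
  all_goals cases e
  · -- false, m < m'
    rw [Iset_false, Iset_false, Set.Ico_disjoint_Ico]
    refine le_trans (min_le_left _ _) (le_trans ?_ (le_max_right _ _))
    rw [Uof_false, Lof_false]
    exact cdfExt_mono hF (by omega)
  · rw [Iset_true, Iset_true, Set.Ioc_disjoint_Ioc]
    refine le_trans (min_le_right _ _) (le_trans ?_ (le_max_left _ _))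
    rw [Uof_true, Lof_true]
    have := cdfExt_mono hF (show ((m:ℤ)) ≤ (m':ℤ) - 1 by omega)
    linarith
  · rw [Iset_false, Iset_false, Set.Ico_disjoint_Ico]
    refine le_trans (min_le_right _ _) (le_trans ?_ (le_max_left _ _))
    rw [Uof_false, Lof_false]
    exact cdfExt_mono hF (by omega)
  · rw [Iset_true, Iset_true, Set.Ioc_disjoint_Ioc]
    refine le_trans (min_le_left _ _) (le_trans ?_ (le_max_right _ _))
    rw [Uof_true, Lof_true]
    have := cdfExt_mono hF (show ((m':ℤ)) ≤ (m:ℤ) - 1 by omega)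
    linarith

lemma Iset_cover (hF : IsCDF F) (e : Bool) {x : ℝ} (hx : x ∈ Set.Ioo (0:ℝ) 1) :
    ∃ m, x ∈ Iset F e m := by
  classical
  cases e
  · -- e = false : need least m with x < F m
    have hex : ∃ m, x < F m := by
      have := hF.2.2.eventually (eventually_gt_nhds hx.2)
      exact (this.exists).imp fun m hm => hm
    let m := Nat.find hex
    refine ⟨m, ?_⟩
    rw [Iset_false, Uof_false, Lof_false]
    constructor
    · rcases Nat.eq_zero_or_pos m with hm | hm
      · rw [hm]; show cdfExt F ((0:ℤ) - 1) ≤ x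
        unfold cdfExt; rw [if_pos (by omega)]; exact hx.1.le
      · have h2 : ¬ x < F (m - 1) := Nat.find_min hex (by omega)
        push_neg at h2
        have : ((m:ℤ) - 1) = ((m - 1 : ℕ) : ℤ) := by omega
        rw [this, cdfExt_nat]; exact h2
    · rw [cdfExt_nat]; exact Nat.find_spec hex
  · -- e = true : least m with 1 - F m < x
    have hex : ∃ m, 1 - F m < x := by
      have := hF.2.2.eventually (eventually_gt_nhds (show 1 - x < 1 by linarith [hx.1]))
      exact (this.exists).imp fun m hm => by linarith
    let m := Nat.find hex
    refine ⟨m, ?_⟩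
    rw [Iset_true, Uof_true, Lof_true]
    constructor
    · rw [cdfExt_nat]; exact Nat.find_spec hex
    · rcases Nat.eq_zero_or_pos m with hm | hm
      · rw [hm]; show x ≤ 1 - cdfExt F ((0:ℤ) - 1)
        unfold cdfExt; rw [if_pos (by omega)]; linarith [hx.2]
      · have h2 : ¬ 1 - F (m - 1) < x := Nat.find_min hex (by omega)
        push_neg at h2
        have : ((m:ℤ) - 1) = ((m - 1 : ℕ) : ℤ) := by omega
        rw [this, cdfExt_nat]; exact h2

/-- measure of a finite intersection of interval-like sets -/
lemma vol_iInter {ι : Type*} [Fintype ι] [Nonempty ι] (C : ι → Set ℝ) (lo up : ι → ℝ)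
    (h1 : ∀ j, Set.Ioo (lo j) (up j) ⊆ C j) (h2 : ∀ j, C j ⊆ Set.Icc (lo j) (up j)) :
    volume (⋂ j, C j) = ENNReal.ofReal
      ((Finset.univ.inf' Finset.univ_nonempty up) - (Finset.univ.sup' Finset.univ_nonempty lo)) := by
  apply le_antisymm
  · calc volume (⋂ j, C j) ≤ volume (Set.Icc (Finset.univ.sup' Finset.univ_nonempty lo)
        (Finset.univ.inf' Finset.univ_nonempty up)) := by
          apply measure_mono
          intro x hx
          simp only [Set.mem_iInter] at hx
          constructor
          · exact Finset.sup'_le _ _ fun j _ => (h2 j (hx j)).1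
          · exact Finset.le_inf' _ _ fun j _ => (h2 j (hx j)).2
      _ = _ := Real.volume_Icc
  · calc ENNReal.ofReal _ = volume (Set.Ioo (Finset.univ.sup' Finset.univ_nonempty lo)
        (Finset.univ.inf' Finset.univ_nonempty up)) := Real.volume_Ioo.symm
      _ ≤ volume (⋂ j, C j) := by
          apply measure_mono
          intro x hx
          simp only [Set.mem_iInter]
          intro j
          exact h1 j ⟨lt_of_le_of_lt (Finset.le_sup' lo (Finset.mem_univ j)) hx.1,
            lt_of_lt_of_le hx.2 (Finset.inf'_le up (Finset.mem_univ j))⟩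

lemma toReal_ofReal' (x : ℝ) : (ENNReal.ofReal x).toReal = max x 0 := by
  rcases le_total x 0 with h | h
  · rw [ENNReal.ofReal_eq_zero.mpr h]; simp [max_eq_right h]
  · rw [ENNReal.toReal_ofReal h, max_eq_left h]

lemma min_one_sub (α δ : ℝ) : min (1 - α) δ = 1 - max α (1 - δ) := by
  simp only [min_def, max_def]; split_ifs <;> linarith

lemma max_one_sub (β γ : ℝ) : max (1 - β) γ = 1 - min β (1 - γ) := by
  simp only [min_def, max_def]; split_ifs <;> linarith

end ExtAux

set_option linter.unusedVariables false


/-- The extreme joint pmf with monotonicity structure `e`: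
`p^e(i) = [min_j F̃_j(i_j − e_j; e_j) − max_j F̃_j(i_j + e_j − 1; e_j)]⁺`. -/
noncomputable def extremePMF {J : ℕ} (hJ : 0 < J) (F : Fin J → ℕ → ℝ) (e : Fin J → Bool)
    (i : Fin J → ℕ) : ℝ :=
  max ((Finset.univ.inf' (Finset.univ_nonempty_iff.mpr ⟨⟨0, hJ⟩⟩)
        (fun j => Ftil (F j) (e j) ((i j : ℤ) - (if e j then 1 else 0)))) -
      (Finset.univ.sup' (Finset.univ_nonempty_iff.mpr ⟨⟨0, hJ⟩⟩)
        (fun j => Ftil (F j) (e j) ((i j : ℤ) + (if e j then 1 else 0) - 1)))) 0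

/-- Comonotone coupling of `F₁, F₂` in pmf form. -/
noncomputable def comonCoupling (F₁ F₂ : ℕ → ℝ) (a b : ℕ) : ℝ :=
  max (min (cdfExt F₁ a) (cdfExt F₂ b) -
    max (cdfExt F₁ ((a : ℤ) - 1)) (cdfExt F₂ ((b : ℤ) - 1))) 0

/-- Antimonotone coupling of `F₁, F₂` in pmf form. -/
noncomputable def antiCoupling (F₁ F₂ : ℕ → ℝ) (a b : ℕ) : ℝ :=
  max (min (cdfExt F₁ a) (1 - cdfExt F₂ ((b : ℤ) - 1)) -
    max (cdfExt F₁ ((a : ℤ) - 1)) (1 - cdfExt F₂ b)) 0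

namespace ExtAux

lemma case_tt (α β γ δ : ℝ) :
    max (min (1-α) (1-γ) - max (1-β) (1-δ)) 0 = max (min β δ - max α γ) 0 := by
  simp only [min_def, max_def]; split_ifs <;> linarith

lemma case_tf (α β γ δ : ℝ) :
    max (min (1-α) δ - max (1-β) γ) 0 = max (min β (1-γ) - max α (1-δ)) 0 := by
  simp only [min_def, max_def]; split_ifs <;> linarith

end ExtAux

open ExtAux in
/-- Every 2-dimensional marginal of the extreme measure `p^e` is the comonotone coupling
if `e_k = e_l` and the antimonotone coupling if `e_k ≠ e_l`. -/
theorem extremePMF_two_dim_marginals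
    {J : ℕ} (hJ : 0 < J) (F : Fin J → ℕ → ℝ) (hF : ∀ j, IsCDF (F j))
    (e : Fin J → Bool) (he : e ⟨0, hJ⟩ = false)
    (k l : Fin J) (hkl : k < l) (a b : ℕ) :
    ∑' i : Fin J → ℕ, (if i k = a ∧ i l = b then extremePMF hJ F e i else 0)
      = if e k = e l then comonCoupling (F k) (F l) a b
        else antiCoupling (F k) (F l) a b := by
  classical
  have hkl' : k ≠ l := ne_of_lt hkl
  have hlk : l ≠ k := hkl'.symm
  haveI : Nonempty (Fin J) := ⟨⟨0, hJ⟩⟩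
  set U : Fin J → ℕ → ℝ := fun j => Uof (F j) (e j) with hU
  set L : Fin J → ℕ → ℝ := fun j => Lof (F j) (e j) with hL
  set Is : Fin J → ℕ → Set ℝ := fun j => Iset (F j) (e j) with hIs
  set A : (Fin J → ℕ) → Set ℝ := fun i => ⋂ j, Is j (i j) with hA
  have hvol : ∀ i : Fin J → ℕ, volume (A i) =
      ENNReal.ofReal ((Finset.univ.inf' Finset.univ_nonempty fun j => U j (i j)) -
        (Finset.univ.sup' Finset.univ_nonempty fun j => L j (i j))) := fun i =>
    vol_iInter _ _ _ (fun j => Ioo_subset_Iset _ _ _) (fun j => Iset_subset_Icc _ _ _)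
  have hp : ∀ i, extremePMF hJ F e i = (volume (A i)).toReal := by
    intro i
    rw [hvol i, toReal_ofReal']
    rfl
  set S : Set (Fin J → ℕ) := {i | i k = a ∧ i l = b} with hS
  have hstep1 : ∑' i : Fin J → ℕ, (if i k = a ∧ i l = b then extremePMF hJ F e i else 0)
      = ∑' i : S, extremePMF hJ F e ↑i := by
    rw [tsum_subtype]
    exact tsum_congr fun i => by
      simp only [Set.indicator_apply, hS, Set.mem_setOf_eq]
  have hstep2 : ∑' i : S, extremePMF hJ F e ↑i = (∑' i : S, volume (A ↑i)).toReal := by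
    rw [ENNReal.tsum_toReal_eq fun i => by rw [hvol]; exact ENNReal.ofReal_ne_top]
    exact tsum_congr fun i => hp _
  have hdisj : Pairwise (Function.onFun Disjoint fun i : S => A ↑i) := by
    rintro ⟨i, hi⟩ ⟨i', hi'⟩ hne'
    have hii : i ≠ i' := fun h => hne' (Subtype.ext h)
    obtain ⟨j, hj⟩ := Function.ne_iff.mp hii
    exact Disjoint.mono (Set.iInter_subset _ j) (Set.iInter_subset _ j)
      (Iset_disjoint (hF j) (e j) hj)
  have hstep3 : ∑' i : S, volume (A ↑i) = volume (⋃ i : S, A ↑i) :=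
    (measure_iUnion hdisj fun i =>
      MeasurableSet.iInter fun j => measurableSet_Iset _ _ _).symm
  -- endpoint functions for the limiting intersection
  set uu : Fin J → ℝ := fun j => if j = k then U k a else if j = l then U l b else 1 with huu
  set ll : Fin J → ℝ := fun j => if j = k then L k a else if j = l then L l b else 0 with hll
  have hUk1 : U k a ≤ 1 := Uof_le_one (hF k) _ _
  have hUl1 : U l b ≤ 1 := Uof_le_one (hF l) _ _
  have hLk0 : 0 ≤ L k a := Lof_nonneg (hF k) _ _
  have hLl0 : 0 ≤ L l b := Lof_nonneg (hF l) _ _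
  have hinf : Finset.univ.inf' Finset.univ_nonempty uu = min (U k a) (U l b) := by
    apply le_antisymm
    · exact le_min ((Finset.inf'_le _ (Finset.mem_univ k)).trans (by simp [huu]))
        ((Finset.inf'_le _ (Finset.mem_univ l)).trans (by simp [huu, hlk]))
    · refine Finset.le_inf' _ _ fun j _ => ?_
      by_cases hjk : j = k
      · subst hjk; simp [huu, min_le_left]
      · by_cases hjl : j = l
        · subst hjl; simp [huu, hjk, min_le_right]
        · simp only [huu, if_neg hjk, if_neg hjl]
          exact (min_le_left _ _).trans hUk1
  have hsup : Finset.univ.sup' Finset.univ_nonempty ll = max (L k a) (L l b) := by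
    apply le_antisymm
    · refine Finset.sup'_le _ _ fun j _ => ?_
      by_cases hjk : j = k
      · subst hjk; simp [hll, le_max_left]
      · by_cases hjl : j = l
        · subst hjl; simp [hll, hjk, le_max_right]
        · simp only [hll, if_neg hjk, if_neg hjl]
          exact hLk0.trans (le_max_left _ _)
    · exact max_le ((by simp [hll] : L k a ≤ ll k).trans (Finset.le_sup' _ (Finset.mem_univ k)))
        ((by simp [hll, hlk] : L l b ≤ ll l).trans (Finset.le_sup' _ (Finset.mem_univ l)))
  set V : ENNReal := ENNReal.ofReal (min (U k a) (U l b) - max (L k a) (L l b)) with hV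
  have hCu : volume (⋂ j, (if j = k then Is k a else if j = l then Is l b
      else Set.Icc (0:ℝ) 1)) = V := by
    rw [vol_iInter _ ll uu ?_ ?_, hinf, hsup]
    · intro j
      by_cases hjk : j = k
      · subst hjk; simp only [huu, hll, if_pos rfl]; exact Ioo_subset_Iset _ _ _
      · by_cases hjl : j = l
        · subst hjl; simp only [huu, hll, if_neg hjk, if_pos rfl]; exact Ioo_subset_Iset _ _ _
        · simp only [huu, hll, if_neg hjk, if_neg hjl]; exact Set.Ioo_subset_Icc_self
    · intro j
      by_cases hjk : j = k
      · subst hjk; simp only [huu, hll, if_pos rfl]; exact Iset_subset_Icc _ _ _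
      · by_cases hjl : j = l
        · subst hjl; simp only [huu, hll, if_neg hjk, if_pos rfl]; exact Iset_subset_Icc _ _ _
        · simp only [huu, hll, if_neg hjk, if_neg hjl]; exact subset_rfl
  have hCl : volume (⋂ j, (if j = k then Is k a else if j = l then Is l b
      else Set.Ioo (0:ℝ) 1)) = V := by
    rw [vol_iInter _ ll uu ?_ ?_, hinf, hsup]
    · intro j
      by_cases hjk : j = k
      · subst hjk; simp only [huu, hll, if_pos rfl]; exact Ioo_subset_Iset _ _ _
      · by_cases hjl : j = l
        · subst hjl; simp only [huu, hll, if_neg hjk, if_pos rfl]; exact Ioo_subset_Iset _ _ _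
        · simp only [huu, hll, if_neg hjk, if_neg hjl]; exact subset_rfl
    · intro j
      by_cases hjk : j = k
      · subst hjk; simp only [huu, hll, if_pos rfl]; exact Iset_subset_Icc _ _ _
      · by_cases hjl : j = l
        · subst hjl; simp only [huu, hll, if_neg hjk, if_pos rfl]; exact Iset_subset_Icc _ _ _
        · simp only [huu, hll, if_neg hjk, if_neg hjl]; exact Set.Ioo_subset_Icc_self
  have hsub1 : (⋃ i : S, A ↑i) ⊆ ⋂ j, (if j = k then Is k a else if j = l then Is l b
      else Set.Icc (0:ℝ) 1) := by
    rintro x hx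
    simp only [Set.mem_iUnion] at hx
    obtain ⟨⟨i, hik, hil⟩, hxi⟩ := hx
    rw [Set.mem_iInter]
    intro j
    have hxj : x ∈ Is j (i j) := Set.mem_iInter.mp hxi j
    by_cases hjk : j = k
    · subst hjk; rw [if_pos rfl]; rwa [hik] at hxj
    · by_cases hjl : j = l
      · subst hjl; rw [if_neg hjk, if_pos rfl]; rwa [hil] at hxj
      · rw [if_neg hjk, if_neg hjl]
        have h2 := Iset_subset_Icc (F j) (e j) (i j) hxj
        exact ⟨(Lof_nonneg (hF j) _ _).trans h2.1, h2.2.trans (Uof_le_one (hF j) _ _)⟩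
  have hsub2 : (⋂ j, (if j = k then Is k a else if j = l then Is l b
      else Set.Ioo (0:ℝ) 1)) ⊆ ⋃ i : S, A ↑i := by
    intro x hx
    have hxj := Set.mem_iInter.mp hx
    have key : ∀ j, j ≠ k → j ≠ l → ∃ m, x ∈ Is j m := by
      intro j hjk hjl
      apply Iset_cover (hF j)
      have h3 := hxj j; rwa [if_neg hjk, if_neg hjl] at h3
    refine Set.mem_iUnion.mpr
      ⟨⟨fun j => if hjk : j = k then a else if hjl : j = l then b
          else (key j hjk hjl).choose, ?_, ?_⟩, ?_⟩
    · simp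
    · simp [hlk]
    · rw [Set.mem_iInter]
      intro j
      by_cases hjk : j = k
      · subst hjk
        simp only [dif_pos rfl]
        have h3 := hxj j; rwa [if_pos rfl] at h3
      · by_cases hjl : j = l
        · subst hjl
          simp only [dif_neg hjk, dif_pos rfl]
          have h3 := hxj j; rwa [if_neg hjk, if_pos rfl] at h3
        · simp only [dif_neg hjk, dif_neg hjl]
          exact (key j hjk hjl).choose_spec
  have hunion : volume (⋃ i : S, A ↑i) = V :=
    le_antisymm (hCu ▸ measure_mono hsub1) (hCl ▸ measure_mono hsub2)
  rw [hstep1, hstep2, hstep3, hunion, hV, toReal_ofReal']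
  simp only [hU, hL]
  rcases hek : e k with _ | _ <;> rcases hel : e l with _ | _ <;>
    simp only [Uof_false, Uof_true, Lof_false, Lof_true, if_pos, if_neg,
      Bool.false_eq_true, Bool.true_eq_false, if_true, if_false, reduceIte]
  · rfl
  · rfl
  · unfold antiCoupling; exact case_tf _ _ _ _
  · unfold comonCoupling; exact case_tt _ _ _ _
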